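/- If σ is a satisfying assignment of the SAT theory T(S,F), then the set A_σ of abstract actions extracted from σ over the selected features F_σ is sound and complete relative to the sample set S. -/

import Mathlib

inductive Change
  | inc | dec | same
deriving DecidableEq

def delta (v v' : ℕ) : Change := if v < v' then .inc else if v' < v then .dec else .same

/-- Qualitative (boolean) value of feature `f` at state `s`: whether its value is 0. -/
def qv {State F : Type} (val : F → State → ℕ) (f : F) (s : State) : Bool :=
  decide (val f s = 0)

def Expanded {State : Type} (S : Set (State × State)) (s : State) : Prop := ∃ s', (s, s') ∈ S

structure Act (F : Type) where
  pre : F → Option Bool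
  eff : F → Option Change

/-- The abstract action `a` is defined only over the features in `sel`. -/
def Over {F : Type} (sel : F → Prop) (a : Act F) : Prop :=
  ∀ f, ¬ sel f → a.pre f = none ∧ a.eff f = none

/-- `a` is applicable in the abstract state of `s`. -/
def App {State F : Type} (val : F → State → ℕ) (a : Act F) (s : State) : Prop :=
  ∀ (f : F) (b : Bool), a.pre f = some b → qv val f s = b

/-- `a` is applicable at `s` and has the same qualitative effects over the selected
features as the transition (s,s'). -/
def Matches {State F : Type} (val : F → State → ℕ) (sel : F → Prop) (a : Act F)
    (s s' : State) : Prop :=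
  App val a s ∧ ∀ f, sel f → (a.eff f).getD .same = delta (val f s) (val f s')

def SoundRel {State F : Type} (val : F → State → ℕ) (S : Set (State × State))
    (sel : F → Prop) (A : Set (Act F)) : Prop :=
  ∀ a ∈ A, ∀ s, Expanded S s → App val a s → ∃ s', (s, s') ∈ S ∧ Matches val sel a s s'

def CompleteRel {State F : Type} (val : F → State → ℕ) (S : Set (State × State))
    (sel : F → Prop) (A : Set (Act F)) : Prop :=
  ∀ p ∈ S, ∃ a ∈ A, Matches val sel a p.1 p.2

/-- Satisfaction of the theory T(S,F) by an assignment (sel, d1, d2):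
clause families (1)-(4). -/
def SatT {State F : Type} (S : Set (State × State)) (goal : State → Prop)
    (val : F → State → ℕ) (sel : F → Prop) (d1 : State → State → Prop)
    (d2 : State → State → State → State → Prop) : Prop :=
  (∀ s t, Expanded S s → Expanded S t →
      (d1 s t ↔ ∃ f, sel f ∧ qv val f s ≠ qv val f t)) ∧
  (∀ s s' t t', (s, s') ∈ S → (t, t') ∈ S →
      (d2 s s' t t' ↔ ∃ f, sel f ∧ qv val f s = qv val f t ∧
          delta (val f s) (val f s') ≠ delta (val f t) (val f t'))) ∧
  (∀ s s' t, (s, s') ∈ S → Expanded S t → ¬ d1 s t →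
      ∃ t', (t, t') ∈ S ∧ ¬ d2 s s' t t') ∧
  (∀ s t, Expanded S s → Expanded S t → (goal s ↔ ¬ goal t) → d1 s t)

open scoped Classical in
/-- The abstract action extracted from transition (s,s') over the selected features. -/
noncomputable def extract {State F : Type} (val : F → State → ℕ) (sel : F → Prop)
    (s s' : State) : Act F :=
  { pre := fun f => if sel f then some (qv val f s) else none,
    eff := fun f => if sel f then some (delta (val f s) (val f s')) else none }

/-! An action extracted from a transition `(t, t')` is applicable exactly at the states that agree
with `t` on the selected features, and it always matches its own transition; this gives
completeness. For soundness, an expanded `s` in the abstract state of `t` is not distinguished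
from `t` (clause 1), so clause 3 yields a successor `s'` with `¬ D2(t, t', s, s')`, which by
clause 2 means `(s, s')` has the same qualitative changes as `(t, t')` on the selected features. -/

section Extract

variable {State F : Type} (val : F → State → ℕ) (sel : F → Prop)

theorem app_extract_iff (t t' s : State) :
    App val (extract val sel t t') s ↔ ∀ f, sel f → qv val f s = qv val f t := by
  constructor
  · intro happ f hf
    exact happ f _ (by simp [extract, hf])
  · intro hagree f b hb
    by_cases hf : sel f
    · simp only [extract, if_pos hf, Option.some_inj] at hb
      rw [hagree f hf, hb]
    · simp [extract, hf] at hb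

theorem extract_eff_getD {f : F} (hf : sel f) (t t' : State) :
    ((extract val sel t t').eff f).getD .same = delta (val f t) (val f t') := by
  simp [extract, hf]

theorem matches_extract_self (s s' : State) : Matches val sel (extract val sel s s') s s' :=
  ⟨(app_extract_iff val sel s s' s).2 fun _ _ => rfl, fun _ hf => extract_eff_getD val sel hf s s'⟩

theorem completeRel_extract (S : Set (State × State)) :
    CompleteRel val S sel {a | ∃ p ∈ S, a = extract val sel p.1 p.2} :=
  fun p hp => ⟨_, ⟨p, hp, rfl⟩, matches_extract_self val sel p.1 p.2⟩

theorem soundRel_extract_of_exists_succ {S : Set (State × State)}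
    (hsucc : ∀ t t' s, (t, t') ∈ S → Expanded S s → (∀ f, sel f → qv val f s = qv val f t) →
      ∃ s', (s, s') ∈ S ∧ ∀ f, sel f → delta (val f s) (val f s') = delta (val f t) (val f t')) :
    SoundRel val S sel {a | ∃ p ∈ S, a = extract val sel p.1 p.2} := by
  rintro _ ⟨⟨t, t'⟩, ht, rfl⟩ s hs happ
  obtain ⟨s', hs', hchange⟩ := hsucc t t' s ht hs ((app_extract_iff val sel t t' s).1 happ)
  exact ⟨s', hs', happ, fun f hf => (extract_eff_getD val sel hf t t').trans (hchange f hf).symm⟩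

end Extract

theorem SatT.exists_succ_of_agree {State F : Type} {S : Set (State × State)}
    {goal : State → Prop} {val : F → State → ℕ} {sel : F → Prop} {d1 : State → State → Prop}
    {d2 : State → State → State → State → Prop} (h : SatT S goal val sel d1 d2)
    {t t' s : State} (ht : (t, t') ∈ S) (hs : Expanded S s)
    (hagree : ∀ f, sel f → qv val f s = qv val f t) :
    ∃ s', (s, s') ∈ S ∧ ∀ f, sel f → delta (val f s) (val f s') = delta (val f t) (val f t') := by
  obtain ⟨hd1, hd2, hsucc, -⟩ := h
  have hnd1 : ¬ d1 t s := by
    rw [hd1 t s ⟨t', ht⟩ hs]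
    rintro ⟨f, hf, hne⟩
    exact hne (hagree f hf).symm
  obtain ⟨s', hs', hnd2⟩ := hsucc t t' s ht hs hnd1
  refine ⟨s', hs', fun f hf => ?_⟩
  by_contra hne
  exact hnd2 ((hd2 t t' s s' ht hs').2 ⟨f, hf, (hagree f hf).symm, Ne.symm hne⟩)

/-- From a satisfying assignment σ of T(S,F), the extracted abstract
actions A_σ over the selected features F_σ are sound and complete relative to S. -/
theorem stmt6 {State F : Type} (S : Set (State × State)) (goal : State → Prop)
    (val : F → State → ℕ) (sel : F → Prop) (d1 : State → State → Prop)
    (d2 : State → State → State → State → Prop)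
    (h : SatT S goal val sel d1 d2) :
    SoundRel val S sel {a | ∃ p ∈ S, a = extract val sel p.1 p.2} ∧
    CompleteRel val S sel {a | ∃ p ∈ S, a = extract val sel p.1 p.2} :=
  ⟨soundRel_extract_of_exists_succ val sel fun _ _ _ ht hs hagree =>
      h.exists_succ_of_agree ht hs hagree,
    completeRel_extract val sel S⟩
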